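/- Let I be the (central) ideal of 𝔏_{0,0,1} spanned by C₃ − 2C₂, and let I' be the corresponding ideal of 𝔏_{0,−1,−1} spanned by C₃ − 2C₂. Then the linear map φ₄ determined by φ₄(C_i) = C_i for i = 1, 2 and φ₄(L_m) = L_m + m J_m, φ₄(J_m) = −J_m + 2δ_{m,0}C₂, φ₄(G_m) = −G_m for m ∈ ℤ induces an isomorphism of Lie algebras 𝔏_{0,0,1}/I ≅ 𝔏_{0,−1,−1}/I'. -/

import Mathlib

/-!
Both algebras have the same basis shape, so the formulas for φ₄ define linear maps in both
directions, and these are mutually inverse: the correction `2δ_{m,0}C₂` is killed by the factor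
`m` in `L_m + mJ_m` and cancels against itself on `J_0`. On basis pairs φ₄ respects the bracket
except for `⁅L_m, L_{-m}⁆` and `⁅L_m, J_{-m}⁆`, where it is off by `m³(C₃ − 2C₂)` and
`m²(C₃ − 2C₂)`. Hence the images of the generators in `𝔏_{0,−1,−1}/I'` satisfy the defining
relations of `𝔏_{0,0,1}`, so φ₄ followed by the projection is a Lie morphism; since it maps `I`
onto `I'`, it descends to the required isomorphism.
-/

noncomputable section

open scoped BigOperators

/-- The combined family consisting of the vectors `L m`, `J m`, `G m` (`m : ℤ`) and
`C₁`, `C₂`, `C₃` in a candidate extended Heisenberg–Virasoro algebra. -/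
def ehvFam {𝔏 : Type*} (Lg Jg Gg : ℤ → 𝔏) (C1 C2 C3 : 𝔏) :
    (Fin 3 × ℤ) ⊕ Fin 3 → 𝔏 :=
  Sum.elim (fun p => ![Lg, Jg, Gg] p.1 p.2) ![C1, C2, C3]

/-- A complex Lie algebra `𝔏`, equipped with distinguished elements
`Lg m`, `Jg m`, `Gg m` (`m : ℤ`) and `C1`, `C2`, `C3`, is a realization of the extended
Heisenberg–Virasoro algebra `𝔏_{α,β,F}` if these elements form a basis, the elements
`C1`, `C2`, `C3` are central, and the defining bracket relations hold. -/
structure IsExtHV {𝔏 : Type*} [LieRing 𝔏] [LieAlgebra ℂ 𝔏]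
    (α β F : ℂ) (Lg Jg Gg : ℤ → 𝔏) (C1 C2 C3 : 𝔏) : Prop where
  lie_LL : ∀ m n : ℤ, ⁅Lg m, Lg n⁆ =
      ((m : ℂ) - (n : ℂ)) • Lg (m + n) +
        (if m + n = 0 then (((m : ℂ) ^ 3 - (m : ℂ)) / 12) • C1 else 0)
  lie_LJ : ∀ m n : ℤ, ⁅Lg m, Jg n⁆ =
      (-(n : ℂ)) • Jg (m + n) -
        (if m + n = 0 then ((m : ℂ) ^ 2 + (m : ℂ)) • C2 else 0)
  lie_JJ : ∀ m n : ℤ, ⁅Jg m, Jg n⁆ = (if m + n = 0 then (m : ℂ) • C3 else 0)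
  lie_LG : ∀ m n : ℤ, ⁅Lg m, Gg n⁆ = (-(α + (n : ℂ) + (m : ℂ) * β)) • Gg (m + n)
  lie_JG : ∀ m n : ℤ, ⁅Jg m, Gg n⁆ = F • Gg (m + n)
  lie_GG : ∀ m n : ℤ, ⁅Gg m, Gg n⁆ = 0
  central_C1 : ∀ x : 𝔏, ⁅C1, x⁆ = 0
  central_C2 : ∀ x : 𝔏, ⁅C2, x⁆ = 0
  central_C3 : ∀ x : 𝔏, ⁅C3, x⁆ = 0
  basis_indep : LinearIndependent ℂ (ehvFam Lg Jg Gg C1 C2 C3)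
  basis_span : Submodule.span ℂ (Set.range (ehvFam Lg Jg Gg C1 C2 C3)) = ⊤

section LieQuotient

variable {R L M : Type*} [CommRing R] [LieRing L] [LieAlgebra R L] [LieRing M] [LieAlgebra R M]

theorem LinearMap.map_lie_of_span_eq_top (f : L →ₗ[R] M) {s : Set L}
    (hs : Submodule.span R s = ⊤) (hf : ∀ x ∈ s, ∀ y ∈ s, f ⁅x, y⁆ = ⁅f x, f y⁆) (x y : L) :
    f ⁅x, y⁆ = ⁅f x, f y⁆ := by
  have hmem (z : L) : z ∈ Submodule.span R s := hs ▸ Submodule.mem_top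
  induction hmem x, hmem y using Submodule.span_induction₂ with
  | mem_mem x y hx hy => exact hf x hx y hy
  | zero_left => simp
  | zero_right => simp
  | add_left x y z _ _ _ hxz hyz => simp only [add_lie, map_add, hxz, hyz]
  | add_right x y z _ _ _ hxy hxz => simp only [lie_add, map_add, hxy, hxz]
  | smul_left r x y _ _ hxy => simp only [smul_lie, map_smul, hxy]
  | smul_right r x y _ _ hxy => simp only [lie_smul, map_smul, hxy]

open LieSubmodule.Quotient in
def LieIdeal.quotientEquivOfLinearEquiv (e : L ≃ₗ[R] M) {I : LieIdeal R L} {J : LieIdeal R M}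
    (hIJ : (I : Submodule R L).map (e : L →ₗ[R] M) = J)
    (he : ∀ x y : L, mk (N := J) (e ⁅x, y⁆) = ⁅mk (N := J) (e x), mk (N := J) (e y)⁆) :
    (L ⧸ I) ≃ₗ⁅R⁆ (M ⧸ J) :=
  { Submodule.Quotient.equiv (I : Submodule R L) (J : Submodule R M) e hIJ with
    map_lie' := by
      rintro ⟨x⟩ ⟨y⟩
      exact he x y }

open LieSubmodule.Quotient in
@[simp]
theorem LieIdeal.quotientEquivOfLinearEquiv_mk (e : L ≃ₗ[R] M) {I : LieIdeal R L}
    {J : LieIdeal R M} (hIJ : (I : Submodule R L).map (e : L →ₗ[R] M) = J)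
    (he : ∀ x y : L, mk (N := J) (e ⁅x, y⁆) = ⁅mk (N := J) (e x), mk (N := J) (e y)⁆) (x : L) :
    LieIdeal.quotientEquivOfLinearEquiv e hIJ he (mk x) = mk (N := J) (e x) :=
  rfl

end LieQuotient

structure ExtHVRelations {M : Type*} [LieRing M] [LieAlgebra ℂ M]
    (α β F : ℂ) (Lg Jg Gg : ℤ → M) (C1 C2 C3 : M) : Prop where
  lie_LL : ∀ m n : ℤ, ⁅Lg m, Lg n⁆ =
      ((m : ℂ) - (n : ℂ)) • Lg (m + n) +
        (if m + n = 0 then (((m : ℂ) ^ 3 - (m : ℂ)) / 12) • C1 else 0)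
  lie_LJ : ∀ m n : ℤ, ⁅Lg m, Jg n⁆ =
      (-(n : ℂ)) • Jg (m + n) -
        (if m + n = 0 then ((m : ℂ) ^ 2 + (m : ℂ)) • C2 else 0)
  lie_JJ : ∀ m n : ℤ, ⁅Jg m, Jg n⁆ = (if m + n = 0 then (m : ℂ) • C3 else 0)
  lie_LG : ∀ m n : ℤ, ⁅Lg m, Gg n⁆ = (-(α + (n : ℂ) + (m : ℂ) * β)) • Gg (m + n)
  lie_JG : ∀ m n : ℤ, ⁅Jg m, Gg n⁆ = F • Gg (m + n)
  lie_GG : ∀ m n : ℤ, ⁅Gg m, Gg n⁆ = 0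
  central_C1 : ∀ x : M, ⁅C1, x⁆ = 0
  central_C2 : ∀ x : M, ⁅C2, x⁆ = 0
  central_C3 : ∀ x : M, ⁅C3, x⁆ = 0

namespace IsExtHV

variable {𝔏 : Type*} [LieRing 𝔏] [LieAlgebra ℂ 𝔏] {α β F : ℂ} {Lg Jg Gg : ℤ → 𝔏}
  {C1 C2 C3 : 𝔏} (h : IsExtHV α β F Lg Jg Gg C1 C2 C3)

include h in
theorem extHVRelations : ExtHVRelations α β F Lg Jg Gg C1 C2 C3 :=
  ⟨h.lie_LL, h.lie_LJ, h.lie_JJ, h.lie_LG, h.lie_JG, h.lie_GG, h.central_C1, h.central_C2,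
    h.central_C3⟩

def basis : Module.Basis ((Fin 3 × ℤ) ⊕ Fin 3) ℂ 𝔏 :=
  .mk h.basis_indep h.basis_span.ge

theorem basis_apply (i : (Fin 3 × ℤ) ⊕ Fin 3) : h.basis i = ehvFam Lg Jg Gg C1 C2 C3 i :=
  Module.Basis.mk_apply _ _ _

section Lift

variable {M N : Type*} [AddCommGroup M] [Module ℂ M] [AddCommGroup N] [Module ℂ N]

def lift (L J G : ℤ → M) (c1 c2 c3 : M) : 𝔏 →ₗ[ℂ] M :=
  h.basis.constr ℂ (ehvFam L J G c1 c2 c3)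

variable (L J G : ℤ → M) (c1 c2 c3 : M)

theorem lift_ehvFam (i : (Fin 3 × ℤ) ⊕ Fin 3) :
    h.lift L J G c1 c2 c3 (ehvFam Lg Jg Gg C1 C2 C3 i) = ehvFam L J G c1 c2 c3 i := by
  rw [← h.basis_apply, lift, Module.Basis.constr_basis]

@[simp]
theorem lift_L (m : ℤ) : h.lift L J G c1 c2 c3 (Lg m) = L m :=
  h.lift_ehvFam L J G c1 c2 c3 (.inl (0, m))

@[simp]
theorem lift_J (m : ℤ) : h.lift L J G c1 c2 c3 (Jg m) = J m :=
  h.lift_ehvFam L J G c1 c2 c3 (.inl (1, m))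

@[simp]
theorem lift_G (m : ℤ) : h.lift L J G c1 c2 c3 (Gg m) = G m :=
  h.lift_ehvFam L J G c1 c2 c3 (.inl (2, m))

@[simp]
theorem lift_C1 : h.lift L J G c1 c2 c3 C1 = c1 := h.lift_ehvFam L J G c1 c2 c3 (.inr 0)

@[simp]
theorem lift_C2 : h.lift L J G c1 c2 c3 C2 = c2 := h.lift_ehvFam L J G c1 c2 c3 (.inr 1)

@[simp]
theorem lift_C3 : h.lift L J G c1 c2 c3 C3 = c3 := h.lift_ehvFam L J G c1 c2 c3 (.inr 2)

theorem comp_lift (f : M →ₗ[ℂ] N) :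
    f.comp (h.lift L J G c1 c2 c3) = h.lift (f ∘ L) (f ∘ J) (f ∘ G) (f c1) (f c2) (f c3) :=
  h.basis.ext fun i => by
    rcases i with ⟨i, m⟩ | i <;> fin_cases i <;> simp [basis_apply, ehvFam]

end Lift

theorem lift_lie {M : Type*} [LieRing M] [LieAlgebra ℂ M] {L J G : ℤ → M} {c1 c2 c3 : M}
    (hR : ExtHVRelations α β F L J G c1 c2 c3) (x y : 𝔏) :
    h.lift L J G c1 c2 c3 ⁅x, y⁆ = ⁅h.lift L J G c1 c2 c3 x, h.lift L J G c1 c2 c3 y⁆ := by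
  set f := h.lift L J G c1 c2 c3
  set e := ehvFam Lg Jg Gg C1 C2 C3
  have swap (a b : 𝔏) (hab : f ⁅a, b⁆ = ⁅f a, f b⁆) : f ⁅b, a⁆ = ⁅f b, f a⁆ := by
    rw [← lie_skew, map_neg, hab, lie_skew]
  have central (k : Fin 3) (z : 𝔏) : f ⁅e (.inr k), z⁆ = ⁅f (e (.inr k)), f z⁆ := by
    fin_cases k <;> simp [e, ehvFam, f, h.central_C1, h.central_C2, h.central_C3,
      hR.central_C1, hR.central_C2, hR.central_C3]
  have ordered (a b : Fin 3) (hab : a ≤ b) (m n : ℤ) :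
      f ⁅e (.inl (a, m)), e (.inl (b, n))⁆ = ⁅f (e (.inl (a, m))), f (e (.inl (b, n)))⁆ := by
    fin_cases a <;> fin_cases b
    all_goals first
      | exact absurd hab (by decide)
      | simp [e, ehvFam, f, h.lie_LL, h.lie_LJ, h.lie_JJ, h.lie_LG, h.lie_JG, h.lie_GG,
          hR.lie_LL, hR.lie_LJ, hR.lie_JJ, hR.lie_LG, hR.lie_JG, hR.lie_GG, apply_ite f]
  refine f.map_lie_of_span_eq_top h.basis_span ?_ x y
  rintro _ ⟨⟨a, m⟩ | k, rfl⟩ _ ⟨⟨b, n⟩ | l, rfl⟩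
  · rcases le_total a b with hab | hba
    · exact ordered a b hab m n
    · exact swap _ _ (ordered b a hba n m)
  · exact swap _ _ (central l _)
  · exact central k _
  · exact central k _

theorem map_lift_lie {M N : Type*} [AddCommGroup M] [Module ℂ M] [LieRing N] [LieAlgebra ℂ N]
    {L J G : ℤ → M} {c1 c2 c3 : M} (f : M →ₗ[ℂ] N)
    (hR : ExtHVRelations α β F (f ∘ L) (f ∘ J) (f ∘ G) (f c1) (f c2) (f c3)) (x y : 𝔏) :
    f (h.lift L J G c1 c2 c3 ⁅x, y⁆) =
      ⁅f (h.lift L J G c1 c2 c3 x), f (h.lift L J G c1 c2 c3 y)⁆ := by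
  simp only [← LinearMap.comp_apply, h.comp_lift, h.lift_lie hR]

end IsExtHV

section Phi4

variable {M : Type*} [AddCommGroup M] [Module ℂ M]

def phi4L (Lg Jg : ℤ → M) (m : ℤ) : M := Lg m + (m : ℂ) • Jg m

def phi4J (Jg : ℤ → M) (C2 : M) (m : ℤ) : M := -Jg m + if m = 0 then (2 : ℂ) • C2 else 0

def phi4G (Gg : ℤ → M) (m : ℤ) : M := -Gg m

end Phi4

namespace ExtHVRelations

variable {M : Type*} [LieRing M] [LieAlgebra ℂ M] {α β F : ℂ} {Lg Jg Gg : ℤ → M}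
  {C1 C2 C3 : M}

theorem lie_JL (hR : ExtHVRelations α β F Lg Jg Gg C1 C2 C3) (m n : ℤ) : ⁅Jg m, Lg n⁆ =
    (m : ℂ) • Jg (m + n) + (if m + n = 0 then ((n : ℂ) ^ 2 + (n : ℂ)) • C2 else 0) := by
  rw [← lie_skew, hR.lie_LJ, add_comm n m]
  split_ifs <;> module

theorem phi4J_lie (hR : ExtHVRelations α β F Lg Jg Gg C1 C2 C3) (m : ℤ) (x : M) :
    ⁅phi4J Jg C2 m, x⁆ = -⁅Jg m, x⁆ := by
  unfold phi4J
  split_ifs <;> simp [smul_lie, hR.central_C2]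

theorem lie_phi4J (hR : ExtHVRelations α β F Lg Jg Gg C1 C2 C3) (x : M) (n : ℤ) :
    ⁅x, phi4J Jg C2 n⁆ = -⁅x, Jg n⁆ := by
  rw [← lie_skew, hR.phi4J_lie, lie_skew]

section Defect

variable (hR : ExtHVRelations 0 (-1) (-1) Lg Jg Gg C1 C2 C3)
include hR

theorem lie_phi4L_phi4L (m n : ℤ) : ⁅phi4L Lg Jg m, phi4L Lg Jg n⁆ =
    ((m : ℂ) - (n : ℂ)) • phi4L Lg Jg (m + n) +
      (if m + n = 0 then (((m : ℂ) ^ 3 - (m : ℂ)) / 12) • C1 - (m : ℂ) ^ 3 • (C3 - (2 : ℂ) • C2)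
        else 0) := by
  simp only [phi4L, lie_add, add_lie, lie_smul, smul_lie, hR.lie_LL, hR.lie_LJ, hR.lie_JL,
    hR.lie_JJ]
  rcases eq_or_ne (m + n) 0 with hmn | hmn
  · obtain rfl : n = -m := by omega
    simp only [add_neg_cancel, if_true]
    push_cast
    module
  · simp only [hmn, if_false]
    module

theorem lie_phi4L_phi4J (m n : ℤ) : ⁅phi4L Lg Jg m, phi4J Jg C2 n⁆ =
    (-(n : ℂ)) • phi4J Jg C2 (m + n) -
      (if m + n = 0 then ((m : ℂ) ^ 2 + (m : ℂ)) • C2 + (m : ℂ) ^ 2 • (C3 - (2 : ℂ) • C2)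
        else 0) := by
  rw [hR.lie_phi4J]
  simp only [phi4L, phi4J, add_lie, smul_lie, hR.lie_LJ, hR.lie_JJ]
  rcases eq_or_ne (m + n) 0 with hmn | hmn
  · obtain rfl : n = -m := by omega
    simp only [add_neg_cancel, if_true]
    push_cast
    module
  · simp only [hmn, if_false]
    module

theorem lie_phi4J_phi4J (m n : ℤ) : ⁅phi4J Jg C2 m, phi4J Jg C2 n⁆ =
    if m + n = 0 then (m : ℂ) • C3 else 0 := by
  rw [hR.phi4J_lie, hR.lie_phi4J, neg_neg, hR.lie_JJ]

theorem lie_phi4L_phi4G (m n : ℤ) : ⁅phi4L Lg Jg m, phi4G Gg n⁆ =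
    (-(0 + (n : ℂ) + (m : ℂ) * 0)) • phi4G Gg (m + n) := by
  simp only [phi4L, phi4G, add_lie, smul_lie, lie_neg, hR.lie_LG, hR.lie_JG]
  module

theorem lie_phi4J_phi4G (m n : ℤ) : ⁅phi4J Jg C2 m, phi4G Gg n⁆ = (1 : ℂ) • phi4G Gg (m + n) := by
  rw [hR.phi4J_lie, phi4G, phi4G, lie_neg, neg_neg, hR.lie_JG, neg_one_smul, one_smul]

theorem lie_phi4G_phi4G (m n : ℤ) : ⁅phi4G Gg m, phi4G Gg n⁆ = 0 := by
  rw [phi4G, phi4G, lie_neg, neg_lie, neg_neg, hR.lie_GG]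

open LieSubmodule.Quotient (mk_bracket) in
theorem quotient_phi4 {I : LieIdeal ℂ M} (hI : C3 - (2 : ℂ) • C2 ∈ I) :
    ExtHVRelations 0 0 1 (LieSubmodule.Quotient.mk (N := I) ∘ phi4L Lg Jg)
      (LieSubmodule.Quotient.mk ∘ phi4J Jg C2) (LieSubmodule.Quotient.mk ∘ phi4G Gg)
      (LieSubmodule.Quotient.mk C1) (LieSubmodule.Quotient.mk C2)
      (LieSubmodule.Quotient.mk C3) := by
  have hC3 : LieSubmodule.Quotient.mk (N := I) C3 = (2 : ℂ) • LieSubmodule.Quotient.mk C2 := by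
    rw [← Submodule.Quotient.mk_smul, Submodule.Quotient.eq]
    exact hI
  have central {C : M} (hC : ∀ x : M, ⁅C, x⁆ = 0) (z : M ⧸ I) :
      ⁅LieSubmodule.Quotient.mk (N := I) C, z⁆ = 0 := by
    induction z using Submodule.Quotient.induction_on with
    | H x => rw [← mk_bracket, hC]; exact Submodule.Quotient.mk_zero _
  refine ⟨fun m n => ?_, fun m n => ?_, fun m n => ?_, fun m n => ?_, fun m n => ?_,
    fun m n => ?_, central hR.central_C1, central hR.central_C2, central hR.central_C3⟩
  all_goals rw [Function.comp_apply, Function.comp_apply, ← mk_bracket]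
  · rw [hR.lie_phi4L_phi4L]
    split_ifs <;> simp [hC3]
  · rw [hR.lie_phi4L_phi4J]
    split_ifs <;> simp [hC3]
  · rw [hR.lie_phi4J_phi4J]
    split_ifs <;> simp
  · rw [hR.lie_phi4L_phi4G]
    simp
  · rw [hR.lie_phi4J_phi4G]
    simp
  · rw [hR.lie_phi4G_phi4G]
    simp

end Defect

end ExtHVRelations

namespace IsExtHV

variable {𝔏 𝔏' : Type*} [LieRing 𝔏] [LieAlgebra ℂ 𝔏] [LieRing 𝔏'] [LieAlgebra ℂ 𝔏']
  {α β F α' β' F' : ℂ} {Lg Jg Gg : ℤ → 𝔏} {C1 C2 C3 : 𝔏} {Lg' Jg' Gg' : ℤ → 𝔏'}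
  {C1' C2' C3' : 𝔏'}

def phi4 {M : Type*} [AddCommGroup M] [Module ℂ M] (h : IsExtHV α β F Lg Jg Gg C1 C2 C3)
    (Lg' Jg' Gg' : ℤ → M) (C1' C2' C3' : M) : 𝔏 →ₗ[ℂ] M :=
  h.lift (phi4L Lg' Jg') (phi4J Jg' C2') (phi4G Gg') C1' C2' C3'

theorem phi4_comp_phi4 (h : IsExtHV α β F Lg Jg Gg C1 C2 C3)
    (h' : IsExtHV α' β' F' Lg' Jg' Gg' C1' C2' C3') :
    (h'.phi4 Lg Jg Gg C1 C2 C3).comp (h.phi4 Lg' Jg' Gg' C1' C2' C3') = LinearMap.id := by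
  refine h.basis.ext fun i => ?_
  rcases i with ⟨a, m⟩ | k
  · by_cases hm : m = 0 <;> fin_cases a <;>
      simp [phi4, basis_apply, ehvFam, phi4L, phi4J, phi4G, hm]
  · fin_cases k <;> simp [phi4, basis_apply, ehvFam]

def phi4Equiv (h : IsExtHV α β F Lg Jg Gg C1 C2 C3)
    (h' : IsExtHV α' β' F' Lg' Jg' Gg' C1' C2' C3') : 𝔏 ≃ₗ[ℂ] 𝔏' :=
  .ofLinearMap (h.phi4 Lg' Jg' Gg' C1' C2' C3') (h'.phi4 Lg Jg Gg C1 C2 C3)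
    (phi4_comp_phi4 h' h) (phi4_comp_phi4 h h')

end IsExtHV

/-- Let `I` be the central ideal of `𝔏_{0,0,1}` spanned by `C₃ − 2C₂`,
and let `I'` be the corresponding ideal of `𝔏_{0,−1,−1}`. Then the map `φ₄` determined
by `φ₄ (C i) = C i` for `i = 1, 2`, `φ₄ (L m) = L m + m J m`,
`φ₄ (J m) = −J m + 2 δ_{m,0} C₂` and `φ₄ (G m) = −G m` induces an isomorphism of Lie
algebras `𝔏_{0,0,1}/I ≅ 𝔏_{0,−1,−1}/I'`. -/
theorem ehv_iso_quotient_C3_eq_two_C2 {𝔏 𝔏' : Type*} [LieRing 𝔏] [LieAlgebra ℂ 𝔏]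
    [LieRing 𝔏'] [LieAlgebra ℂ 𝔏']
    (Lg Jg Gg : ℤ → 𝔏) (C1 C2 C3 : 𝔏) (Lg' Jg' Gg' : ℤ → 𝔏') (C1' C2' C3' : 𝔏')
    (h : IsExtHV 0 0 1 Lg Jg Gg C1 C2 C3)
    (h' : IsExtHV 0 (-1) (-1) Lg' Jg' Gg' C1' C2' C3')
    (I : LieIdeal ℂ 𝔏) (hI : (I : Submodule ℂ 𝔏) = Submodule.span ℂ {C3 - (2 : ℂ) • C2})
    (I' : LieIdeal ℂ 𝔏')
    (hI' : (I' : Submodule ℂ 𝔏') = Submodule.span ℂ {C3' - (2 : ℂ) • C2'}) :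
    ∃ e : (𝔏 ⧸ I) ≃ₗ⁅ℂ⁆ (𝔏' ⧸ I'),
      (∀ m : ℤ, e (LieSubmodule.Quotient.mk (N := I) (Lg m)) =
          LieSubmodule.Quotient.mk (N := I') (Lg' m + (m : ℂ) • Jg' m)) ∧
      (∀ m : ℤ, e (LieSubmodule.Quotient.mk (N := I) (Jg m)) =
          LieSubmodule.Quotient.mk (N := I')
            (-Jg' m + (if m = 0 then (2 : ℂ) • C2' else 0))) ∧
      (∀ m : ℤ, e (LieSubmodule.Quotient.mk (N := I) (Gg m)) =
          LieSubmodule.Quotient.mk (N := I') (-Gg' m)) ∧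
      e (LieSubmodule.Quotient.mk (N := I) C1) =
        LieSubmodule.Quotient.mk (N := I') C1' ∧
      e (LieSubmodule.Quotient.mk (N := I) C2) =
        LieSubmodule.Quotient.mk (N := I') C2' := by
  set φ := h.phi4Equiv h'
  have hφ_ideal : (I : Submodule ℂ 𝔏).map (φ : 𝔏 →ₗ[ℂ] 𝔏') = I' := by
    rw [hI, hI', Submodule.map_span, Set.image_singleton]
    simp [φ, IsExtHV.phi4Equiv, IsExtHV.phi4]
  have hφ_lie (x y : 𝔏) : LieSubmodule.Quotient.mk (N := I') (φ ⁅x, y⁆) =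
      ⁅LieSubmodule.Quotient.mk (N := I') (φ x), LieSubmodule.Quotient.mk (N := I') (φ y)⁆ := by
    have hC : C3' - (2 : ℂ) • C2' ∈ (I' : Submodule ℂ 𝔏') :=
      hI' ▸ Submodule.mem_span_singleton_self _
    exact h.map_lift_lie (LieSubmodule.Quotient.mk' I' : 𝔏' →ₗ[ℂ] 𝔏' ⧸ I')
      (h'.extHVRelations.quotient_phi4 hC) x y
  refine ⟨LieIdeal.quotientEquivOfLinearEquiv φ hφ_ideal hφ_lie, ?_, ?_, ?_, ?_, ?_⟩ <;>
    simp [φ, IsExtHV.phi4Equiv, IsExtHV.phi4, phi4L, phi4J, phi4G]
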